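/- Let G_1 and G_2 be finite twin-free graphs such that each of them has the property that every minimum separating set S admits an S-universal vertex. If the join G_1 ∨ G_2 is twin-free, then the minimum size of a separating set of G_1 ∨ G_2 equals γ^S(G_1) + γ^S(G_2) + 1; furthermore every separating set of G_1 ∨ G_2 of this size admits an S-universal vertex. -/

import Mathlib

open SimpleGraph

/-- The closed ball of radius 1 (closed neighborhood) of `x`. -/
def ball {V : Type*} (G : SimpleGraph V) (x : V) : Set V := {y | y = x ∨ G.Adj x y}

/-- `C` separates every pair of distinct vertices. -/
def IsSeparating {V : Type*} (G : SimpleGraph V) (C : Set V) : Prop :=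
  ∀ x y : V, x ≠ y → _root_.ball G x ∩ C ≠ _root_.ball G y ∩ C

/-- `C` is an identifying code of `G`. -/
def IsIdCode {V : Type*} (G : SimpleGraph V) (C : Set V) : Prop :=
  (∀ x : V, (_root_.ball G x ∩ C).Nonempty) ∧ IsSeparating G C

/-- A graph is twin-free if distinct vertices have distinct closed neighborhoods. -/
def TwinFree {V : Type*} (G : SimpleGraph V) : Prop :=
  ∀ x y : V, _root_.ball G x = _root_.ball G y → x = y

/-- The minimum size of an identifying code. -/
noncomputable def gammaID {V : Type*} (G : SimpleGraph V) : ℕ :=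
  sInf {n | ∃ C : Set V, IsIdCode G C ∧ C.ncard = n}

/-- The minimum size of a separating set. -/
noncomputable def gammaS {V : Type*} (G : SimpleGraph V) : ℕ :=
  sInf {n | ∃ C : Set V, IsSeparating G C ∧ C.ncard = n}

/-- The graph `A_k` on vertices `x_1,…,x_{2k}` (indexed `0,…,2k-1`):
`x_i` adjacent to `x_j` iff `i ≠ j` and `|i - j| ≤ k - 1`. -/
def Agraph (k : ℕ) : SimpleGraph (Fin (2 * k)) where
  Adj i j := i ≠ j ∧ ((i : ℤ) - (j : ℤ)).natAbs ≤ k - 1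
  symm := ⟨by
    intro i j h
    refine ⟨h.1.symm, ?_⟩
    have : ((j : ℤ) - (i : ℤ)).natAbs = ((i : ℤ) - (j : ℤ)).natAbs := by
      rw [← Int.natAbs_neg]; ring_nf
    omega⟩
  loopless := ⟨by intro i h; exact h.1 rfl⟩

/-- The join of two graphs. -/
def joinG {α β : Type*} (G₁ : SimpleGraph α) (G₂ : SimpleGraph β) : SimpleGraph (α ⊕ β) where
  Adj x y := match x, y with
    | Sum.inl a, Sum.inl b => G₁.Adj a b
    | Sum.inr a, Sum.inr b => G₂.Adj a b
    | _, _ => True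
  symm := ⟨by rintro (a | a) (b | b) h <;> first | exact h.symm | trivial⟩
  loopless := ⟨by
    rintro (a | a) h
    · exact G₁.loopless.irrefl _ h
    · exact G₂.loopless.irrefl _ h⟩

/-- The star `K_{1,t}`: vertex `0` is the center, adjacent to all other vertices. -/
def starGraph (t : ℕ) : SimpleGraph (Fin (t + 1)) where
  Adj i j := i ≠ j ∧ (i = 0 ∨ j = 0)
  symm := ⟨by rintro i j ⟨h1, h2⟩; exact ⟨h1.symm, h2.symm⟩⟩
  loopless := ⟨by rintro i ⟨h1, _⟩; exact h1 rfl⟩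

/-
A set `S` of the join separates two vertices on the same side iff its trace on that side does,
and it separates `a ∈ V₁` from `b ∈ V₂` unless `a` is universal for `S ∩ V₁` and `b` for `S ∩ V₂`.
So if `|S| ≤ γ^S(G₁) + γ^S(G₂)` both traces are minimum, hence have universal vertices, which is
impossible; and if `|S| = γ^S(G₁) + γ^S(G₂) + 1` one trace is minimum, and its universal vertex is
universal for all of `S`. For the upper bound, twin-freeness of the join leaves one side, say
`G₁`, without a dominating vertex. A separating set has at most one universal vertex, so adding to
a minimum separating set `C₁` of `G₁` a vertex outside the ball of its universal vertex leaves no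
universal vertex at all, and then `(C₁ + v) ∪ C₂` separates the join.
-/

open Set

section Separating

variable {V : Type*} {G : SimpleGraph V} {C C' : Set V}

lemma IsSeparating.mono (h : IsSeparating G C) (hCC' : C ⊆ C') : IsSeparating G C' := by
  intro x y hxy he
  apply h x y hxy
  rw [← inter_eq_right.2 hCC', ← inter_assoc, he, inter_assoc]

lemma TwinFree.isSeparating_univ (h : TwinFree G) : IsSeparating G univ := by
  intro x y hxy he
  rw [inter_univ, inter_univ] at he
  exact hxy (h x y he)

lemma gammaS_le_ncard (h : IsSeparating G C) : gammaS G ≤ C.ncard := Nat.sInf_le ⟨C, h, rfl⟩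

lemma TwinFree.exists_isSeparating_ncard_eq_gammaS (h : TwinFree G) :
    ∃ C, IsSeparating G C ∧ C.ncard = gammaS G :=
  Nat.sInf_mem (s := {n | ∃ C, IsSeparating G C ∧ C.ncard = n})
    ⟨_, univ, h.isSeparating_univ, rfl⟩

lemma IsSeparating.eq_of_subset_ball (h : IsSeparating G C) {u w : V} (hu : C ⊆ _root_.ball G u)
    (hw : C ⊆ _root_.ball G w) : u = w := by
  by_contra huw
  exact h u w huw (by rw [inter_eq_right.2 hu, inter_eq_right.2 hw])

lemma IsSeparating.not_exists_insert_subset_ball (h : IsSeparating G C) {v w : V}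
    (hw : C ⊆ _root_.ball G w) (hv : v ∉ _root_.ball G w) : ¬∃ u, insert v C ⊆ _root_.ball G u := by
  rintro ⟨u, hu⟩
  obtain rfl := h.eq_of_subset_ball ((subset_insert v C).trans hu) hw
  exact hv (hu (mem_insert v C))

variable (G) in
def HasUniversalMinSeparating : Prop :=
  ∀ S : Set V, IsSeparating G S →
    (∀ S' : Set V, IsSeparating G S' → S.ncard ≤ S'.ncard) → ∃ x, S ⊆ _root_.ball G x

lemma HasUniversalMinSeparating.exists_subset_ball (hG : HasUniversalMinSeparating G)
    (hC : IsSeparating G C) (hCγ : C.ncard = gammaS G) : ∃ x, C ⊆ _root_.ball G x :=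
  hG C hC fun _ hC' => hCγ ▸ gammaS_le_ncard hC'

lemma HasUniversalMinSeparating.exists_isSeparating_ncard_eq_gammaS_add_one [Finite V]
    (hG : HasUniversalMinSeparating G) (hTF : TwinFree G) (hdom : ∀ w, ∃ v, v ∉ _root_.ball G w) :
    ∃ C, IsSeparating G C ∧ C.ncard = gammaS G + 1 ∧ ¬∃ u, C ⊆ _root_.ball G u := by
  obtain ⟨C, hC, hCγ⟩ := hTF.exists_isSeparating_ncard_eq_gammaS
  obtain ⟨w, hw⟩ := hG.exists_subset_ball hC hCγ
  obtain ⟨v, hv⟩ := hdom w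
  refine ⟨insert v C, hC.mono (subset_insert v C), ?_, hC.not_exists_insert_subset_ball hw hv⟩
  rw [ncard_insert_of_notMem fun hvC => hv (hw hvC), hCγ]

end Separating

lemma Set.eq_iff_preimage_inl_eq_and_preimage_inr_eq {α β : Type*} {s t : Set (α ⊕ β)} :
    s = t ↔ Sum.inl ⁻¹' s = Sum.inl ⁻¹' t ∧ Sum.inr ⁻¹' s = Sum.inr ⁻¹' t :=
  Set.sumEquiv.injective.eq_iff.symm.trans Prod.ext_iff

lemma Set.subset_iff_preimage_inl_subset_and_preimage_inr_subset {α β : Type*}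
    {s t : Set (α ⊕ β)} :
    s ⊆ t ↔ Sum.inl ⁻¹' s ⊆ Sum.inl ⁻¹' t ∧ Sum.inr ⁻¹' s ⊆ Sum.inr ⁻¹' t := by
  rw [← Set.sumEquiv.le_iff_le]; rfl

lemma Set.ncard_image_inl_union_image_inr {α β : Type*} [Finite α] [Finite β] (s : Set α)
    (t : Set β) : (Sum.inl '' s ∪ Sum.inr '' t).ncard = s.ncard + t.ncard := by
  rw [ncard_union_eq disjoint_image_inl_image_inr, ncard_image_of_injective _ Sum.inl_injective,
    ncard_image_of_injective _ Sum.inr_injective]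

lemma Set.ncard_eq_ncard_preimage_inl_add_ncard_preimage_inr {α β : Type*} [Finite α] [Finite β]
    (s : Set (α ⊕ β)) : s.ncard = (Sum.inl ⁻¹' s).ncard + (Sum.inr ⁻¹' s).ncard := by
  conv_lhs => rw [← image_preimage_inl_union_image_preimage_inr s]
  exact ncard_image_inl_union_image_inr _ _

section Join

variable {V₁ V₂ : Type*} {G₁ : SimpleGraph V₁} {G₂ : SimpleGraph V₂} {S : Set (V₁ ⊕ V₂)}

@[simp] lemma preimage_inl_ball_joinG_inl (a : V₁) :
    Sum.inl ⁻¹' _root_.ball (joinG G₁ G₂) (.inl a) = _root_.ball G₁ a := by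
  ext; simp [_root_.ball, joinG]

@[simp] lemma preimage_inr_ball_joinG_inl (a : V₁) :
    Sum.inr ⁻¹' _root_.ball (joinG G₁ G₂) (.inl a) = univ := by
  ext; simp [_root_.ball, joinG]

@[simp] lemma preimage_inl_ball_joinG_inr (b : V₂) :
    Sum.inl ⁻¹' _root_.ball (joinG G₁ G₂) (.inr b) = univ := by
  ext; simp [_root_.ball, joinG]

@[simp] lemma preimage_inr_ball_joinG_inr (b : V₂) :
    Sum.inr ⁻¹' _root_.ball (joinG G₁ G₂) (.inr b) = _root_.ball G₂ b := by
  ext; simp [_root_.ball, joinG]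

lemma isSeparating_joinG_iff :
    IsSeparating (joinG G₁ G₂) S ↔
      IsSeparating G₁ (Sum.inl ⁻¹' S) ∧ IsSeparating G₂ (Sum.inr ⁻¹' S) ∧
        ¬((∃ a, Sum.inl ⁻¹' S ⊆ _root_.ball G₁ a) ∧ ∃ b, Sum.inr ⁻¹' S ⊆ _root_.ball G₂ b) := by
  simp only [IsSeparating, Sum.forall, ne_eq, Sum.inl.injEq, Sum.inr.injEq, reduceCtorEq,
    not_false_eq_true, eq_iff_preimage_inl_eq_and_preimage_inr_eq, preimage_inter,
    preimage_inl_ball_joinG_inl, preimage_inr_ball_joinG_inl, preimage_inl_ball_joinG_inr,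
    preimage_inr_ball_joinG_inr, univ_inter, inter_eq_right, right_eq_inter, subset_univ,
    not_true_eq_false, imp_false, forall_const, forall_and, not_and, not_exists,
    forall_exists_index]
  exact ⟨fun ⟨⟨h₁, _⟩, h₁₂, h₂⟩ => ⟨h₁, h₂, fun a ha b => h₁₂ a b ha⟩,
    fun ⟨h₁, h₂, h₁₂⟩ => ⟨⟨h₁, fun b a ha => h₁₂ a ha b⟩, fun a b ha => h₁₂ a ha b, h₂⟩⟩

lemma isSeparating_joinG_image_union {C₁ : Set V₁} {C₂ : Set V₂} (h₁ : IsSeparating G₁ C₁)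
    (h₂ : IsSeparating G₂ C₂)
    (hno : ¬((∃ a, C₁ ⊆ _root_.ball G₁ a) ∧ ∃ b, C₂ ⊆ _root_.ball G₂ b)) :
    IsSeparating (joinG G₁ G₂) (Sum.inl '' C₁ ∪ Sum.inr '' C₂) := by
  rw [isSeparating_joinG_iff]
  simp only [preimage_union, preimage_image_eq _ Sum.inl_injective,
    preimage_image_eq _ Sum.inr_injective, preimage_inl_image_inr, preimage_inr_image_inl,
    union_empty, empty_union]
  exact ⟨h₁, h₂, hno⟩

lemma subset_ball_joinG_inl {a : V₁} (ha : Sum.inl ⁻¹' S ⊆ _root_.ball G₁ a) :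
    S ⊆ _root_.ball (joinG G₁ G₂) (.inl a) := by
  simpa [subset_iff_preimage_inl_subset_and_preimage_inr_subset] using ha

lemma subset_ball_joinG_inr {b : V₂} (hb : Sum.inr ⁻¹' S ⊆ _root_.ball G₂ b) :
    S ⊆ _root_.ball (joinG G₁ G₂) (.inr b) := by
  simpa [subset_iff_preimage_inl_subset_and_preimage_inr_subset] using hb

lemma TwinFree.exists_notMem_ball_of_joinG (h : TwinFree (joinG G₁ G₂)) :
    (∀ a, ∃ v, v ∉ _root_.ball G₁ a) ∨ ∀ b, ∃ v, v ∉ _root_.ball G₂ b := by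
  by_contra! ⟨⟨a, ha⟩, ⟨b, hb⟩⟩
  refine Sum.inl_ne_inr (h (.inl a) (.inr b) ?_)
  simp [eq_iff_preimage_inl_eq_and_preimage_inr_eq, eq_univ_of_forall ha, eq_univ_of_forall hb]

variable [Finite V₁] [Finite V₂]

lemma exists_isSeparating_joinG_ncard_eq (hG₁ : HasUniversalMinSeparating G₁)
    (hG₂ : HasUniversalMinSeparating G₂) (hTF₁ : TwinFree G₁) (hTF₂ : TwinFree G₂)
    (hTF : TwinFree (joinG G₁ G₂)) :
    ∃ S, IsSeparating (joinG G₁ G₂) S ∧ S.ncard = gammaS G₁ + gammaS G₂ + 1 := by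
  rcases hTF.exists_notMem_ball_of_joinG with hdom | hdom
  · obtain ⟨C₁, hC₁, hn₁, hno⟩ := hG₁.exists_isSeparating_ncard_eq_gammaS_add_one hTF₁ hdom
    obtain ⟨C₂, hC₂, hn₂⟩ := hTF₂.exists_isSeparating_ncard_eq_gammaS
    refine ⟨_, isSeparating_joinG_image_union hC₁ hC₂ fun h => hno h.1, ?_⟩
    rw [ncard_image_inl_union_image_inr, hn₁, hn₂, add_right_comm]
  · obtain ⟨C₁, hC₁, hn₁⟩ := hTF₁.exists_isSeparating_ncard_eq_gammaS
    obtain ⟨C₂, hC₂, hn₂, hno⟩ := hG₂.exists_isSeparating_ncard_eq_gammaS_add_one hTF₂ hdom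
    refine ⟨_, isSeparating_joinG_image_union hC₁ hC₂ fun h => hno h.2, ?_⟩
    rw [ncard_image_inl_union_image_inr, hn₁, hn₂, add_assoc]

variable (hG₁ : HasUniversalMinSeparating G₁) (hG₂ : HasUniversalMinSeparating G₂)
include hG₁ hG₂

lemma gammaS_add_gammaS_lt_ncard_of_isSeparating_joinG (hS : IsSeparating (joinG G₁ G₂) S) :
    gammaS G₁ + gammaS G₂ < S.ncard := by
  obtain ⟨hS₁, hS₂, hno⟩ := isSeparating_joinG_iff.1 hS
  have hγ₁ := gammaS_le_ncard hS₁
  have hγ₂ := gammaS_le_ncard hS₂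
  rw [ncard_eq_ncard_preimage_inl_add_ncard_preimage_inr]
  by_contra!
  exact hno ⟨hG₁.exists_subset_ball hS₁ (by omega), hG₂.exists_subset_ball hS₂ (by omega)⟩

lemma exists_subset_ball_joinG_of_ncard_le (hS : IsSeparating (joinG G₁ G₂) S)
    (hcard : S.ncard ≤ gammaS G₁ + gammaS G₂ + 1) : ∃ x, S ⊆ _root_.ball (joinG G₁ G₂) x := by
  obtain ⟨hS₁, hS₂, -⟩ := isSeparating_joinG_iff.1 hS
  have hγ₁ := gammaS_le_ncard hS₁
  have hγ₂ := gammaS_le_ncard hS₂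
  rw [ncard_eq_ncard_preimage_inl_add_ncard_preimage_inr] at hcard
  rcases (by omega : (Sum.inl ⁻¹' S).ncard = gammaS G₁ ∨ (Sum.inr ⁻¹' S).ncard = gammaS G₂)
    with h | h
  · obtain ⟨a, ha⟩ := hG₁.exists_subset_ball hS₁ h
    exact ⟨.inl a, subset_ball_joinG_inl ha⟩
  · obtain ⟨b, hb⟩ := hG₂.exists_subset_ball hS₂ h
    exact ⟨.inr b, subset_ball_joinG_inr hb⟩

end Join

theorem stmt9 {V₁ V₂ : Type*} [Fintype V₁] [Fintype V₂]
    (G₁ : SimpleGraph V₁) (G₂ : SimpleGraph V₂)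
    (hTF₁ : TwinFree G₁) (hTF₂ : TwinFree G₂)
    (huniv₁ : ∀ S : Set V₁, IsSeparating G₁ S →
      (∀ S' : Set V₁, IsSeparating G₁ S' → S.ncard ≤ S'.ncard) → ∃ x, S ⊆ ball G₁ x)
    (huniv₂ : ∀ S : Set V₂, IsSeparating G₂ S →
      (∀ S' : Set V₂, IsSeparating G₂ S' → S.ncard ≤ S'.ncard) → ∃ x, S ⊆ ball G₂ x)
    (hTF : TwinFree (joinG G₁ G₂)) :
    gammaS (joinG G₁ G₂) = gammaS G₁ + gammaS G₂ + 1 ∧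
    ∀ S : Set (V₁ ⊕ V₂), IsSeparating (joinG G₁ G₂) S →
      S.ncard = gammaS G₁ + gammaS G₂ + 1 → ∃ x, S ⊆ ball (joinG G₁ G₂) x := by
  obtain ⟨S₀, hS₀, hS₀card⟩ := exists_isSeparating_joinG_ncard_eq huniv₁ huniv₂ hTF₁ hTF₂ hTF
  obtain ⟨Smin, hSmin, hSmin_card⟩ := hTF.exists_isSeparating_ncard_eq_gammaS
  have hlower := gammaS_add_gammaS_lt_ncard_of_isSeparating_joinG huniv₁ huniv₂ hSmin
  have hupper := gammaS_le_ncard hS₀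
  exact ⟨by omega, fun S hS hcard => exists_subset_ball_joinG_of_ncard_le huniv₁ huniv₂ hS hcard.le⟩
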